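/- arXiv:2603.07948 — 5 statements merged into one kernel-verified Lean document; each statement's English description precedes it below -/
import Mathlib

section
/- For every list L of lines, every pair of integer bounds l ≤ r, and every integer x with l ≤ x ≤ r: query (insertAll L l r) x l r equals the minimum over f ∈ L of (eval f x : WithTop ℤ), where the minimum over the empty list is ⊤. In particular, the Li-Chao tree query returns exactly the value of the lower envelope of all inserted lines at x. -/
/-- A line `y = k*x + b`, represented as the pair `(k, b)` of integers. -/
abbrev Line : Type := ℤ × ℤ

/-- Evaluation of a line at an integer point. -/
def Line.eval (f : Line) (x : ℤ) : ℤ := f.1 * x + f.2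

/-- A Li-Chao tree: either empty, or a node storing a line with two subtrees. -/
inductive LiChao : Type where
  | nil : LiChao
  | node : Line → LiChao → LiChao → LiChao

/-- Insert a line `f` into the tree over integer bounds `[l, r]`. -/
def LiChao.insert : LiChao → Line → ℤ → ℤ → LiChao
  | .nil, f, _, _ => .node f .nil .nil
  | .node s a b, f, l, r =>
    let m := (l + r) / 2
    let win : Line := if f.eval m < s.eval m then f else s
    let lose : Line := if f.eval m < s.eval m then s else f
    if l = r then .node win a b
    else if lose.eval l < win.eval l then
      .node win (LiChao.insert a lose l m) b
    else
      .node win a (LiChao.insert b lose (m + 1) r)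

/-- Query the minimum value at `x` over bounds `[l, r]`; `⊤` for the empty tree. -/
def LiChao.query : LiChao → ℤ → ℤ → ℤ → WithTop ℤ
  | .nil, _, _, _ => ⊤
  | .node s a b, x, l, r =>
    let m := (l + r) / 2
    if x ≤ m then min (s.eval x : WithTop ℤ) (LiChao.query a x l m)
    else min (s.eval x : WithTop ℤ) (LiChao.query b x (m + 1) r)

/-- Fold insertion over a list of lines, starting from the empty tree. -/
def LiChao.insertAll (L : List Line) (l r : ℤ) : LiChao :=
  L.foldl (fun t f => t.insert f l r) .nil

/-- Number of `node` constructors in the tree. -/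
def LiChao.size : LiChao → ℕ
  | .nil => 0
  | .node _ a b => 1 + a.size + b.size

/-- Height of the tree. -/
def LiChao.height : LiChao → ℕ
  | .nil => 0
  | .node _ a b => 1 + max a.height b.height


/-! Insertion keeps at each node the line that is lower at the midpoint `m`. Two lines cross at
most once, so the discarded line can beat the kept one on at most one side of `m`, and insertion
sends it into exactly that half. Hence inserting `f` changes every query on `[l, r]` by taking a
minimum with `f`, and folding this over the list gives the lower envelope. -/

namespace Line

theorem eval_le_eval_of_between {p q : Line} {l m x : ℤ} (hl : p.eval l ≤ q.eval l)
    (hm : p.eval m ≤ q.eval m) (hlx : l ≤ x) (hxm : x ≤ m) : p.eval x ≤ q.eval x := by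
  simp only [eval] at *
  rcases le_total p.1 q.1 with h | h <;> nlinarith

theorem eval_le_eval_of_crossing {p q : Line} {l m x : ℤ} (hl : q.eval l < p.eval l)
    (hm : p.eval m ≤ q.eval m) (hlm : l ≤ m) (hmx : m ≤ x) : p.eval x ≤ q.eval x := by
  simp only [eval] at *
  have hslope : p.1 < q.1 := by nlinarith
  nlinarith

end Line

namespace LiChao

theorem exists_insert_node_eq (s : Line) (a b : LiChao) (f : Line) (l r : ℤ) :
    ∃ w u : Line, w.eval ((l + r) / 2) ≤ u.eval ((l + r) / 2) ∧
      (∀ y, min (w.eval y) (u.eval y) = min (f.eval y) (s.eval y)) ∧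
      (node s a b).insert f l r =
        if l = r then node w a b
        else if u.eval l < w.eval l then node w (a.insert u l ((l + r) / 2)) b
        else node w a (b.insert u ((l + r) / 2 + 1) r) := by
  by_cases h : f.eval ((l + r) / 2) < s.eval ((l + r) / 2)
  · exact ⟨f, s, h.le, fun _ => rfl, by simp [insert, h]⟩
  · exact ⟨s, f, not_lt.1 h, fun _ => min_comm _ _, by simp [insert, h]⟩

theorem query_node (s : Line) (a b : LiChao) (x l r : ℤ) :
    (node s a b).query x l r = min (s.eval x : WithTop ℤ)
      (if x ≤ (l + r) / 2 then a.query x l ((l + r) / 2) else b.query x ((l + r) / 2 + 1) r) := by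
  rw [query]; split_ifs <;> rfl

theorem query_insert {t : LiChao} {f : Line} {l r x : ℤ} (hlx : l ≤ x) (hxr : x ≤ r) :
    (t.insert f l r).query x l r = min (f.eval x : WithTop ℤ) (t.query x l r) := by
  induction t generalizing f l r with
  | nil => simp only [insert, query_node, query]; split_ifs <;> simp
  | node s a b iha ihb =>
    obtain ⟨w, u, hwu, hmin, hins⟩ := exists_insert_node_eq s a b f l r
    have hdrop (h : w.eval x ≤ u.eval x) (c : WithTop ℤ) :
        min (w.eval x : WithTop ℤ) (min (u.eval x : WithTop ℤ) c) = min (w.eval x : WithTop ℤ) c := by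
      rw [← min_assoc, min_eq_left (WithTop.coe_le_coe.2 h)]
    rw [hins, query_node s, ← min_assoc, ← WithTop.coe_min, ← hmin, WithTop.coe_min, min_assoc]
    by_cases hx : x ≤ (l + r) / 2
    · split_ifs with hlr hcross <;> simp only [query_node, hx, if_true]
      · rw [hdrop (by convert hwu <;> omega)]
      · rw [iha hlx hx]
      · rw [hdrop (Line.eval_le_eval_of_between (not_lt.1 hcross) hwu hlx hx)]
    · split_ifs with hlr hcross <;> simp only [query_node, hx, if_false]
      · omega
      · rw [hdrop (Line.eval_le_eval_of_crossing hcross hwu (by omega) (by omega))]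
      · rw [ihb (by omega) hxr]

theorem query_foldl_insert (L : List Line) (t : LiChao) {l r x : ℤ} (hlx : l ≤ x) (hxr : x ≤ r) :
    (L.foldl (fun t f => t.insert f l r) t).query x l r =
      (L.map fun f => (f.eval x : WithTop ℤ)).foldl min (t.query x l r) := by
  induction L generalizing t with
  | nil => rfl
  | cons f L ih => rw [List.foldl_cons, ih, query_insert hlx hxr, min_comm]; rfl

end LiChao

theorem lichao_query_correct_general (L : List Line) (l r : ℤ)
    (x : ℤ) (hlx : l ≤ x) (hxr : x ≤ r) :
    (LiChao.insertAll L l r).query x l r =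
      (L.map (fun f => (f.eval x : WithTop ℤ))).foldr min ⊤ := by
  rw [LiChao.insertAll, LiChao.query_foldl_insert L .nil hlx hxr, ← List.foldl_eq_foldr]
  rfl

/-- Theorem 3 (Query Correctness): the query returns exactly the lower
envelope of all inserted lines at `x` (the minimum over the empty list is `⊤`). -/
theorem lichao_query_correct (L : List Line) (l r : ℤ) (hlr : l ≤ r)
    (x : ℤ) (hlx : l ≤ x) (hxr : x ≤ r) :
    (LiChao.insertAll L l r).query x l r =
      (L.map (fun f => (f.eval x : WithTop ℤ))).foldr min ⊤ :=
  lichao_query_correct_general L l r x hlx hxr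
end

section
/- For every list L of lines, every pair of integer bounds l ≤ r, every integer x with l ≤ x ≤ r, and every line f ∈ L: query (insertAll L l r) x l r ≤ (eval f x : WithTop ℤ). -/
namespace Line

theorem eval_le_of_le_of_le {f g : Line} {l m x : ℤ} (hl : f.eval l ≤ g.eval l)
    (hm : f.eval m ≤ g.eval m) (hlx : l ≤ x) (hxm : x ≤ m) : f.eval x ≤ g.eval x := by
  unfold eval at *
  rcases le_total f.1 g.1 with h | h <;> nlinarith

theorem eval_le_of_lt_of_le {f g : Line} {l m x : ℤ} (hlm : l ≤ m) (hl : g.eval l < f.eval l)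
    (hm : f.eval m ≤ g.eval m) (hmx : m ≤ x) : f.eval x ≤ g.eval x := by
  unfold eval at *
  have hslope : f.1 < g.1 := by nlinarith
  nlinarith

end Line

namespace LiChao

theorem query_node_of_le {s : Line} {a b : LiChao} {x l r : ℤ} (hxm : x ≤ (l + r) / 2) :
    (node s a b).query x l r = min (s.eval x : WithTop ℤ) (a.query x l ((l + r) / 2)) := by
  simp only [query, if_pos hxm]

theorem query_node_of_lt {s : Line} {a b : LiChao} {x l r : ℤ} (hmx : (l + r) / 2 < x) :
    (node s a b).query x l r = min (s.eval x : WithTop ℤ) (b.query x ((l + r) / 2 + 1) r) := by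
  simp only [query, if_neg (not_le.mpr hmx)]

theorem insert_node (s f : Line) (a b : LiChao) (l r : ℤ) :
    ∃ win lose : Line, (win = f ∧ lose = s ∨ win = s ∧ lose = f) ∧
      win.eval ((l + r) / 2) ≤ lose.eval ((l + r) / 2) ∧
      (node s a b).insert f l r =
        if l = r then node win a b
        else if lose.eval l < win.eval l then node win (a.insert lose l ((l + r) / 2)) b
        else node win a (b.insert lose ((l + r) / 2 + 1) r) := by
  by_cases h : f.eval ((l + r) / 2) < s.eval ((l + r) / 2)
  · exact ⟨f, s, .inl ⟨rfl, rfl⟩, h.le, by simp only [insert, if_pos h]⟩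
  · exact ⟨s, f, .inr ⟨rfl, rfl⟩, not_lt.mp h, by simp only [insert, if_neg h]⟩

theorem query_insert_le (t : LiChao) (f : Line) {l r x : ℤ} (hlx : l ≤ x) (hxr : x ≤ r) :
    (t.insert f l r).query x l r ≤ min (f.eval x : WithTop ℤ) (t.query x l r) := by
  induction t generalizing f l r with
  | nil => by_cases hxm : x ≤ (l + r) / 2 <;> simp [insert, query, hxm]
  | node s a b iha ihb =>
    obtain ⟨win, lose, hpair, hmid, hins⟩ := insert_node s f a b l r
    set m := (l + r) / 2
    have hswap :
        min (f.eval x : WithTop ℤ) (s.eval x) = min (win.eval x : WithTop ℤ) (lose.eval x) := by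
      rcases hpair with ⟨rfl, rfl⟩ | ⟨rfl, rfl⟩
      · rfl
      · exact min_comm _ _
    have hm : m = (l + r) / 2 := rfl
    have absorb {Q : WithTop ℤ} (h : win.eval x ≤ lose.eval x) :
        min (win.eval x : WithTop ℤ) Q ≤ min ↑(win.eval x) (min ↑(lose.eval x) Q) := by
      rw [← min_assoc, min_eq_left (WithTop.coe_le_coe.mpr h)]
    rcases le_or_gt x m with hxm | hxm
    · rw [query_node_of_le hxm, ← min_assoc, hswap, min_assoc, hins]
      split_ifs with heq hside
      · rw [query_node_of_le hxm]
        exact absorb (by rwa [show x = m by omega])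
      · rw [query_node_of_le hxm]
        exact min_le_min_left _ (iha lose hlx hxm)
      · rw [query_node_of_le hxm]
        exact absorb (Line.eval_le_of_le_of_le (not_lt.mp hside) hmid hlx hxm)
    · rw [query_node_of_lt hxm, ← min_assoc, hswap, min_assoc, hins]
      split_ifs with heq hside
      · omega
      · rw [query_node_of_lt hxm]
        exact absorb (Line.eval_le_of_lt_of_le (by omega) hside hmid hxm.le)
      · rw [query_node_of_lt hxm]
        exact min_le_min_left _ (ihb lose (by omega) hxr)

variable {l r x : ℤ}

theorem query_foldl_insert_le_query (hlx : l ≤ x) (hxr : x ≤ r) (M : List Line) (t : LiChao) :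
    (M.foldl (fun t g => t.insert g l r) t).query x l r ≤ t.query x l r := by
  induction M generalizing t with
  | nil => exact le_rfl
  | cons g M ih => exact (ih _).trans ((query_insert_le t g hlx hxr).trans (min_le_right _ _))

theorem query_foldl_insert_le_eval (hlx : l ≤ x) (hxr : x ≤ r) {f : Line} {M : List Line}
    (hf : f ∈ M) (t : LiChao) :
    (M.foldl (fun t g => t.insert g l r) t).query x l r ≤ (f.eval x : WithTop ℤ) := by
  induction M generalizing t with
  | nil => cases hf
  | cons g M ih =>
    rcases List.mem_cons.mp hf with rfl | hf
    · exact (query_foldl_insert_le_query hlx hxr M _).trans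
        ((query_insert_le t f hlx hxr).trans (min_le_left _ _))
    · exact ih hf _

end LiChao

theorem lichao_query_le_general (L : List Line) (l r : ℤ)
    (x : ℤ) (hlx : l ≤ x) (hxr : x ≤ r) (f : Line) (hf : f ∈ L) :
    (LiChao.insertAll L l r).query x l r ≤ (f.eval x : WithTop ℤ) :=
  LiChao.query_foldl_insert_le_eval hlx hxr hf .nil

/-- The nontrivial direction of Theorem 3: the query result is at most the
value at `x` of every inserted line. -/
theorem lichao_query_le (L : List Line) (l r : ℤ) (hlr : l ≤ r)
    (x : ℤ) (hlx : l ≤ x) (hxr : x ≤ r) (f : Line) (hf : f ∈ L) :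
    (LiChao.insertAll L l r).query x l r ≤ (f.eval x : WithTop ℤ) :=
  lichao_query_le_general L l r x hlx hxr f hf
end

section
/- For every nonempty list L of lines, every pair of integer bounds l ≤ r, and every integer x with l ≤ x ≤ r: there exists a line f ∈ L such that query (insertAll L l r) x l r = (eval f x : WithTop ℤ). -/
/-!
Insertion never invents a line: a node keeps one of the stored and the new line and passes
the other down (or drops it), so every line stored in `insertAll L l r` belongs to `L`.
A query returns the minimum of the values at `x` of the lines on a root-to-leaf path, and
this minimum is attained by one of them; the path is nonempty as soon as `L` is.
-/

namespace LiChao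

def lines : LiChao → List Line
  | nil => []
  | node s a b => s :: (a.lines ++ b.lines)

theorem insert_ne_nil (t : LiChao) (f : Line) (l r : ℤ) : t.insert f l r ≠ nil := by
  cases t with
  | nil => simp [LiChao.insert]
  | node => simp only [LiChao.insert]; split_ifs <;> simp

theorem lines_insert_subset (t : LiChao) (f : Line) (l r : ℤ) :
    (t.insert f l r).lines ⊆ f :: t.lines := by
  induction t generalizing f l r with
  | nil => simp [LiChao.insert, lines]
  | node s a b iha ihb =>
    simp only [List.subset_def, List.mem_cons] at iha ihb
    simp only [LiChao.insert]
    split_ifs <;> simp only [lines, List.subset_def, List.mem_cons, List.mem_append] <;> grind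

theorem foldl_insert_ne_nil (L : List Line) (l r : ℤ) {t : LiChao} (ht : t ≠ nil) :
    L.foldl (fun t f => t.insert f l r) t ≠ nil := by
  induction L generalizing t with
  | nil => exact ht
  | cons g L ih => exact ih (insert_ne_nil t g l r)

theorem lines_foldl_insert_subset (L : List Line) (l r : ℤ) (t : LiChao) :
    (L.foldl (fun t f => t.insert f l r) t).lines ⊆ L ++ t.lines := by
  induction L generalizing t with
  | nil => exact List.Subset.refl _
  | cons g L ih =>
    intro f hf
    have hins := lines_insert_subset t g l r
    rcases List.mem_append.1 (ih _ hf) with hL | ht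
    · exact List.mem_append_left _ (List.mem_cons_of_mem g hL)
    · rcases List.mem_cons.1 (hins ht) with rfl | ht
      · exact List.mem_append_left _ List.mem_cons_self
      · exact List.mem_append_right _ ht

theorem insertAll_ne_nil {L : List Line} (hL : L ≠ []) (l r : ℤ) : insertAll L l r ≠ nil := by
  obtain ⟨g, L, rfl⟩ := List.exists_cons_of_ne_nil hL
  exact foldl_insert_ne_nil L l r (insert_ne_nil nil g l r)

theorem lines_insertAll_subset (L : List Line) (l r : ℤ) : (insertAll L l r).lines ⊆ L := by
  unfold insertAll
  simpa [lines] using lines_foldl_insert_subset L l r nil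

theorem query_eq_top_or_exists_mem_lines (t : LiChao) (x l r : ℤ) :
    t.query x l r = ⊤ ∨ ∃ f ∈ t.lines, t.query x l r = f.eval x := by
  induction t generalizing l r with
  | nil => exact Or.inl rfl
  | node s a b iha ihb =>
    rw [query_node]
    rcases min_choice (s.eval x : WithTop ℤ) _ with h | h
    · exact Or.inr ⟨s, List.mem_cons_self, h⟩
    · rw [h]
      split_ifs
      · exact (iha l _).imp_right fun ⟨f, hf, hq⟩ ↦
          ⟨f, List.mem_cons_of_mem s (List.mem_append_left _ hf), hq⟩
      · exact (ihb _ r).imp_right fun ⟨f, hf, hq⟩ ↦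
          ⟨f, List.mem_cons_of_mem s (List.mem_append_right _ hf), hq⟩

theorem query_ne_top_of_ne_nil {t : LiChao} (ht : t ≠ nil) (x l r : ℤ) : t.query x l r ≠ ⊤ := by
  cases t with
  | nil => exact absurd rfl ht
  | node s a b => simp [query_node]

theorem exists_mem_lines_query_eq {t : LiChao} (ht : t ≠ nil) (x l r : ℤ) :
    ∃ f ∈ t.lines, t.query x l r = f.eval x :=
  (query_eq_top_or_exists_mem_lines t x l r).resolve_left (query_ne_top_of_ne_nil ht x l r)

end LiChao

theorem lichao_query_achieved_general (L : List Line) (hL : L ≠ []) (l r : ℤ) (x : ℤ) :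
    ∃ f ∈ L, (LiChao.insertAll L l r).query x l r = (f.eval x : WithTop ℤ) := by
  obtain ⟨f, hf, hq⟩ := LiChao.exists_mem_lines_query_eq (LiChao.insertAll_ne_nil hL l r) x l r
  exact ⟨f, LiChao.lines_insertAll_subset L l r hf, hq⟩

/-- The easy direction of Theorem 3: the query result is achieved by some
inserted line. -/
theorem lichao_query_achieved (L : List Line) (hL : L ≠ []) (l r : ℤ) (hlr : l ≤ r)
    (x : ℤ) (hlx : l ≤ x) (hxr : x ≤ r) :
    ∃ f ∈ L, (LiChao.insertAll L l r).query x l r = (f.eval x : WithTop ℤ) :=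
  lichao_query_achieved_general L hL l r x
end

section
/- For every list L of lines and every pair of integer bounds l ≤ r: size (insertAll L l r) ≤ L.length, where size counts the number of node constructors in the tree. In particular, after N insertions into an initially empty Li-Chao tree the tree has at most N nodes. -/
namespace LiChao

-- Insertion descends along a single path and creates a node only where that path reaches `nil`.
theorem size_insert_le (t : LiChao) (f : Line) (l r : ℤ) :
    (t.insert f l r).size ≤ t.size + 1 := by
  induction t generalizing f l r with
  | nil => simp [insert, size]
  | node s a b iha ihb =>
    simp only [insert]
    split_ifs <;> simp only [size] <;> grind

theorem size_foldl_insert_le (L : List Line) (t : LiChao) (l r : ℤ) :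
    (L.foldl (fun t f => t.insert f l r) t).size ≤ t.size + L.length := by
  induction L generalizing t with
  | nil => simp
  | cons f L ih =>
    calc _ ≤ (t.insert f l r).size + L.length := ih _
      _ ≤ t.size + (L.length + 1) := by grind [size_insert_le t f l r]

end LiChao

theorem lichao_size_le_length_general (L : List Line) (l r : ℤ) :
    (LiChao.insertAll L l r).size ≤ L.length := by
  simpa [LiChao.insertAll, LiChao.size] using LiChao.size_foldl_insert_le L .nil l r

/-- Proposition 6 (Space Complexity): after `N` insertions into an initially
empty Li-Chao tree, the tree has at most `N` nodes. -/
theorem lichao_size_le_length (L : List Line) (l r : ℤ) (hlr : l ≤ r) :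
    (LiChao.insertAll L l r).size ≤ L.length :=
  lichao_size_le_length_general L l r
end

section
/- For every list L of lines and every pair of integer bounds l ≤ r: height (insertAll L l r) ≤ Nat.clog 2 (r − l + 1).toNat + 1, where height is the usual tree height (height nil = 0, height (node s a b) = 1 + max (height a) (height b)). In particular, a Li-Chao tree over an integer coordinate universe of size C = r − l + 1 has depth O(log C), so insertion and query each visit O(log C) nodes. -/
/-! Insertion into a node on `[l, r]` only ever descends into `[l, m]` or `[m + 1, r]` with
`m = (l + r) / 2`, and stops at a single point, so every tree built by insertion is a subtree of the
segment tree on `[l, r]`. Both halves of an interval of size `C ≥ 2` have size at most `⌈C / 2⌉`,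
which lowers `⌈log₂ C⌉` by one, so that segment tree has height `⌈log₂ C⌉ + 1`. -/

theorem Nat.clog_two_add_one_le {c n : ℕ} (hn : 1 < n) (hc : c ≤ (n + 1) / 2) :
    Nat.clog 2 c + 1 ≤ Nat.clog 2 n := by
  rw [Nat.clog_of_one_lt one_lt_two hn]
  exact Nat.add_le_add_right (Nat.clog_mono_right 2 hc) 1

namespace LiChao

inductive Shaped : ℤ → ℤ → LiChao → Prop where
  | nil {l r : ℤ} : Shaped l r .nil
  | leaf {l : ℤ} {s : Line} : Shaped l l (.node s .nil .nil)
  | node {l r : ℤ} {s : Line} {a b : LiChao} (hlr : l < r)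
      (ha : Shaped l ((l + r) / 2) a) (hb : Shaped ((l + r) / 2 + 1) r b) :
      Shaped l r (.node s a b)

theorem Shaped.insert {l r : ℤ} {t : LiChao} (h : Shaped l r t) (hlr : l ≤ r) (f : Line) :
    Shaped l r (t.insert f l r) := by
  induction t generalizing f l r with
  | nil =>
    rcases hlr.eq_or_lt with rfl | hlt
    · exact .leaf
    · exact .node hlt .nil .nil
  | node s a b iha ihb =>
    rcases h with _ | _ | ⟨hlt, ha, hb⟩
    · simp only [LiChao.insert, if_pos]
      split_ifs <;> exact .leaf
    · simp only [LiChao.insert, if_neg hlt.ne]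
      have hla : l ≤ (l + r) / 2 := by omega
      have hrb : (l + r) / 2 + 1 ≤ r := by omega
      split_ifs
      all_goals first
        | exact .node hlt (iha ha hla _) hb
        | exact .node hlt ha (ihb hb hrb _)

theorem shaped_insertAll (L : List Line) {l r : ℤ} (hlr : l ≤ r) :
    Shaped l r (insertAll L l r) := by
  unfold insertAll
  induction L using List.reverseRecOn with
  | nil => exact .nil
  | append_singleton L f ih =>
    rw [List.foldl_append, List.foldl_cons, List.foldl_nil]
    exact ih.insert hlr f

theorem Shaped.height_le {l r : ℤ} {t : LiChao} (h : Shaped l r t) :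
    t.height ≤ Nat.clog 2 (r - l + 1).toNat + 1 := by
  induction h with
  | nil => simp [height]
  | leaf => simp [height]
  | @node l r s a b hlt _ _ iha ihb =>
    have hleft : Nat.clog 2 ((l + r) / 2 - l + 1).toNat + 1 ≤ Nat.clog 2 (r - l + 1).toNat :=
      Nat.clog_two_add_one_le (by omega) (by omega)
    have hright : Nat.clog 2 (r - ((l + r) / 2 + 1) + 1).toNat + 1 ≤ Nat.clog 2 (r - l + 1).toNat :=
      Nat.clog_two_add_one_le (by omega) (by omega)
    simp only [height]
    omega

end LiChao

/-- Proposition 5 (structural part): a Li-Chao tree over an integer universe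
of size `C = r - l + 1` has height at most `⌈log₂ C⌉ + 1`. -/
theorem lichao_height_le (L : List Line) (l r : ℤ) (hlr : l ≤ r) :
    (LiChao.insertAll L l r).height ≤ Nat.clog 2 (r - l + 1).toNat + 1 :=
  (LiChao.shaped_insertAll L hlr).height_le
end
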